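/- arXiv:2001.01516 — 13 statements merged into one kernel-verified Lean document; each statement's English description precedes it below -/
import Mathlib

section
/- Acceleration via Monotonic Decrease (Theorem 1, exactness): Let φ : ℤ^d → Prop and a : ℤ^d → ℤ^d be such that φ(a(x)) implies φ(x) for all x ∈ ℤ^d. Then for every n > 0 and all x, x' ∈ ℤ^d: (x' = aⁿ(x) ∧ φ(a^{n-1}(x))) holds if and only if x →ⁿ_{⟨φ,a⟩} x'. -/
def Step {d : ℕ} (φ : (Fin d → ℤ) → Prop) (a : (Fin d → ℤ) → (Fin d → ℤ))
    (x x' : Fin d → ℤ) : Prop :=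
  φ x ∧ x' = a x

def StepN {d : ℕ} (φ : (Fin d → ℤ) → Prop) (a : (Fin d → ℤ) → (Fin d → ℤ)) :
    ℕ → (Fin d → ℤ) → (Fin d → ℤ) → Prop
  | 0, x, x' => x = x'
  | n + 1, x, x' => ∃ y, Step φ a x y ∧ StepN φ a n y x'
theorem acceleration_via_monotonic_decrease_exact
    {d : ℕ} (φ : (Fin d → ℤ) → Prop) (a : (Fin d → ℤ) → (Fin d → ℤ))
    (hmon : ∀ x : Fin d → ℤ, φ (a x) → φ x) :
    ∀ n : ℕ, 0 < n → ∀ x x' : Fin d → ℤ,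
      (x' = a^[n] x ∧ φ (a^[n - 1] x)) ↔ StepN φ a n x x' := by
  intro n
  induction n with
  | zero => intro h; exact absurd h (lt_irrefl 0)
  | succ n ih =>
    intro _ x x'
    simp only [Nat.add_sub_cancel]
    constructor
    · rintro ⟨hx', hφ⟩
      -- φ (a^[n] x), so by hmon, φ (a^[k] x) for all k ≤ n
      have hφ0 : φ x := by
        have : ∀ k, φ (a^[k] x) → φ x := by
          intro k
          induction k with
          | zero => exact fun h => h
          | succ k ihk =>
            intro h
            rw [Function.iterate_succ_apply'] at h
            exact ihk (hmon _ h)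
        exact this n hφ
      cases n with
      | zero =>
        exact ⟨a x, ⟨hφ0, rfl⟩, by simpa [StepN] using hx'.symm⟩
      | succ m =>
        refine ⟨a x, ⟨hφ0, rfl⟩, (ih (Nat.succ_pos m) (a x) x').mp ?_⟩
        constructor
        · rw [hx', Function.iterate_succ_apply]
        · rw [Nat.add_sub_cancel, ← Function.iterate_succ_apply]
          exact hφ
    · rintro ⟨y, ⟨hφx, hy⟩, hrest⟩
      cases n with
      | zero =>
        obtain rfl : y = x' := hrest
        exact ⟨by simpa using hy, by simpa using hφx⟩
      | succ m =>
        obtain ⟨h1, h2⟩ := (ih (Nat.succ_pos m) y x').mpr hrest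
        rw [Nat.add_sub_cancel] at h2
        subst hy
        refine ⟨by rw [h1, ← Function.iterate_succ_apply], ?_⟩
        rw [← Function.iterate_succ_apply] at h2
        exact h2
end

section
/- Acceleration via Monotonicity (Theorem 3, exactness): Let φ, φ₁, φ₂, φ₃ : ℤ^d → Prop and a : ℤ^d → ℤ^d satisfy, for all x ∈ ℤ^d: φ(x) ↔ (φ₁(x) ∧ φ₂(x) ∧ φ₃(x)); φ₁(x) → φ₁(a(x)); (φ₁(x) ∧ φ₂(a(x))) → φ₂(x); and (φ₁(x) ∧ φ₂(x) ∧ φ₃(x)) → φ₃(a(x)). Then for every n > 0 and all x, x' ∈ ℤ^d: (x' = aⁿ(x) ∧ φ₁(x) ∧ φ₂(a^{n-1}(x)) ∧ φ₃(x)) holds if and only if x →ⁿ_{⟨φ,a⟩} x'. -/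
private lemma phi2_back {d : ℕ} {φ₁ φ₂ : (Fin d → ℤ) → Prop}
    {a : (Fin d → ℤ) → (Fin d → ℤ)}
    (h1 : ∀ x : Fin d → ℤ, φ₁ x → φ₁ (a x))
    (h2 : ∀ x : Fin d → ℤ, φ₁ x ∧ φ₂ (a x) → φ₂ x) :
    ∀ k : ℕ, ∀ x : Fin d → ℤ, φ₁ x → φ₂ (a^[k] x) → φ₂ x := by
  intro k
  induction k with
  | zero => intro x _ h; simpa using h
  | succ k ih =>
    intro x hx h
    exact h2 x ⟨hx, ih (a x) (h1 x hx) (by rw [← Function.iterate_succ_apply]; exact h)⟩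

theorem acceleration_via_monotonicity_exact
    {d : ℕ} (φ φ₁ φ₂ φ₃ : (Fin d → ℤ) → Prop) (a : (Fin d → ℤ) → (Fin d → ℤ))
    (hsplit : ∀ x : Fin d → ℤ, φ x ↔ (φ₁ x ∧ φ₂ x ∧ φ₃ x))
    (h1 : ∀ x : Fin d → ℤ, φ₁ x → φ₁ (a x))
    (h2 : ∀ x : Fin d → ℤ, φ₁ x ∧ φ₂ (a x) → φ₂ x)
    (h3 : ∀ x : Fin d → ℤ, φ₁ x ∧ φ₂ x ∧ φ₃ x → φ₃ (a x)) :
    ∀ n : ℕ, 0 < n → ∀ x x' : Fin d → ℤ,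
      (x' = a^[n] x ∧ φ₁ x ∧ φ₂ (a^[n - 1] x) ∧ φ₃ x) ↔ StepN φ a n x x' := by
  intro n
  induction n with
  | zero => intro h; exact absurd h (lt_irrefl 0)
  | succ n ih =>
    intro _ x x'
    constructor
    · rintro ⟨hx', hp1, hp2, hp3⟩
      have hp2x : φ₂ x := phi2_back h1 h2 n x hp1 (by simpa using hp2)
      have hφx : φ x := (hsplit x).2 ⟨hp1, hp2x, hp3⟩
      cases n with
      | zero =>
        exact ⟨a x, ⟨hφx, rfl⟩, by simpa [StepN] using hx'.symm⟩
      | succ n =>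
        refine ⟨a x, ⟨hφx, rfl⟩, (ih (Nat.succ_pos n) (a x) x').1 ?_⟩
        refine ⟨by simpa [Function.iterate_succ_apply] using hx', h1 x hp1, ?_,
          h3 x ⟨hp1, hp2x, hp3⟩⟩
        simpa [Function.iterate_succ_apply] using hp2
    · rintro ⟨y, ⟨hφx, rfl⟩, hsn⟩
      obtain ⟨hp1, hp2x, hp3⟩ := (hsplit x).1 hφx
      cases n with
      | zero =>
        obtain rfl : a x = x' := hsn
        exact ⟨by simp, hp1, by simpa using hp2x, hp3⟩
      | succ n =>
        obtain ⟨hx', hq1, hq2, hq3⟩ := (ih (Nat.succ_pos n) (a x) x').2 hsn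
        refine ⟨by simpa [Function.iterate_succ_apply] using hx', hp1, ?_, hp3⟩
        simpa [Function.iterate_succ_apply] using hq2
end

section
/- Acceleration via Metering Functions (Theorem 4, soundness): Let φ : ℤ^d → Prop, a : ℤ^d → ℤ^d, and let mf : ℤ^d → ℚ be a metering function for ⟨φ,a⟩, i.e., for all x ∈ ℤ^d: φ(x) → mf(x) - mf(a(x)) ≤ 1, and ¬φ(x) → mf(x) ≤ 0. Then for every n > 0 and all x, x' ∈ ℤ^d: (x' = aⁿ(x) ∧ φ(x) ∧ (n : ℚ) < mf(x) + 1) implies x →ⁿ_{⟨φ,a⟩} x'. -/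
theorem acceleration_via_metering_functions_sound
    {d : ℕ} (φ : (Fin d → ℤ) → Prop) (a : (Fin d → ℤ) → (Fin d → ℤ))
    (mf : (Fin d → ℤ) → ℚ)
    (hdec : ∀ x : Fin d → ℤ, φ x → mf x - mf (a x) ≤ 1)
    (hbound : ∀ x : Fin d → ℤ, ¬ φ x → mf x ≤ 0) :
    ∀ n : ℕ, 0 < n → ∀ x x' : Fin d → ℤ,
      (x' = a^[n] x ∧ φ x ∧ (n : ℚ) < mf x + 1) → StepN φ a n x x' := by
  intro n
  induction n with
  | zero => intro h; exact absurd h (lt_irrefl 0)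
  | succ n ih =>
    intro _ x x' ⟨hx', hφ, hlt⟩
    subst hx'
    refine ⟨a x, ⟨hφ, rfl⟩, ?_⟩
    rw [Function.iterate_succ_apply]
    rcases Nat.eq_zero_or_pos n with h0 | hpos
    · subst h0; rfl
    · have hφa : φ (a x) := by
        by_contra hneg
        have h1 := hbound _ hneg
        have h2 := hdec _ hφ
        have : (n : ℚ) + 1 < 2 := by
          push_cast at hlt ⊢; linarith
        have : (n : ℚ) < 1 := by linarith
        have : n < 1 := by exact_mod_cast this
        omega
      exact ih hpos (a x) (a^[n] (a x)) ⟨rfl, hφa, by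
        have h2 := hdec _ hφ
        push_cast at hlt ⊢; linarith⟩
end

section
/- Soundness of one step of the acceleration calculus (Lemma 1, consistency part): Let φ̌, χ : ℤ^d → Prop, a : ℤ^d → ℤ^d, and let ψ₁, ψ₂ : ℤ^d → ℕ → ℤ^d → Prop. Assume (i) ψ₁ approximates ⟨φ̌,a⟩, i.e., for all n > 0 and x, x' ∈ ℤ^d, ψ₁(x,n,x') implies x →ⁿ_{⟨φ̌,a⟩} x'; and (ii) ψ₂ is the result of a sound conditional acceleration, i.e., for all n > 0 and x, x' ∈ ℤ^d, (x →ⁿ_{⟨φ̌,a⟩} x' ∧ ψ₂(x,n,x')) implies x →ⁿ_{⟨χ,a⟩} x'. Then for all n > 0 and x, x' ∈ ℤ^d, (ψ₁(x,n,x') ∧ ψ₂(x,n,x')) implies x →ⁿ_{⟨λ y, φ̌(y) ∧ χ(y), a⟩} x'. -/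
lemma stepN_and {d : ℕ} (φ χ : (Fin d → ℤ) → Prop) (a : (Fin d → ℤ) → (Fin d → ℤ)) :
    ∀ n x x', StepN φ a n x x' → StepN χ a n x x' →
      StepN (fun y => φ y ∧ χ y) a n x x'
  | 0, x, x', h, _ => h
  | n + 1, x, x', ⟨y, ⟨hφ, hy⟩, hrest⟩, ⟨z, ⟨hχ, hz⟩, hrest'⟩ => by
    subst hy
    exact ⟨a x, ⟨⟨hφ, hχ⟩, rfl⟩, stepN_and φ χ a n _ _ hrest (hz ▸ hrest')⟩

theorem calculus_step_consistency
    {d : ℕ} (φc χ : (Fin d → ℤ) → Prop) (a : (Fin d → ℤ) → (Fin d → ℤ))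
    (ψ₁ ψ₂ : (Fin d → ℤ) → ℕ → (Fin d → ℤ) → Prop)
    (h1 : ∀ n : ℕ, 0 < n → ∀ x x' : Fin d → ℤ, ψ₁ x n x' → StepN φc a n x x')
    (h2 : ∀ n : ℕ, 0 < n → ∀ x x' : Fin d → ℤ,
      StepN φc a n x x' ∧ ψ₂ x n x' → StepN χ a n x x') :
    ∀ n : ℕ, 0 < n → ∀ x x' : Fin d → ℤ,
      ψ₁ x n x' ∧ ψ₂ x n x' → StepN (fun y => φc y ∧ χ y) a n x x' := by
  intro n hn x x' ⟨hp1, hp2⟩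
  have hφ := h1 n hn x x' hp1
  exact stepN_and φc χ a n x x' hφ (h2 n hn x x' ⟨hφ, hp2⟩)
end

section
/- Conditional Acceleration via Monotonic Decrease (Theorem 5, soundness): Let φ̌, χ : ℤ^d → Prop and a : ℤ^d → ℤ^d satisfy (φ̌(x) ∧ χ(a(x))) → χ(x) for all x ∈ ℤ^d. Then for every n > 0 and all x, x' ∈ ℤ^d: (x →ⁿ_{⟨φ̌,a⟩} x' ∧ x' = aⁿ(x) ∧ χ(a^{n-1}(x))) implies x →ⁿ_{⟨χ,a⟩} x'. -/
lemma stepN_split {d : ℕ} (φ : (Fin d → ℤ) → Prop) (a : (Fin d → ℤ) → (Fin d → ℤ)) :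
    ∀ n x x', StepN φ a (n + 1) x x' →
      StepN φ a n x (a^[n] x) ∧ Step φ a (a^[n] x) x' := by
  intro n
  induction n with
  | zero => intro x x' ⟨y, hs, he⟩; exact ⟨rfl, (show y = x' from he) ▸ hs⟩
  | succ m ih =>
    intro x x' ⟨y, hs, hrest⟩
    obtain ⟨h1, h2⟩ := ih y x' hrest
    refine ⟨⟨y, hs, ?_⟩, ?_⟩
    · simpa [Function.iterate_succ_apply, hs.2] using h1
    · simpa [Function.iterate_succ_apply, hs.2] using h2

lemma stepN_chi {d : ℕ} (φc χ : (Fin d → ℤ) → Prop) (a : (Fin d → ℤ) → (Fin d → ℤ))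
    (hmon : ∀ x : Fin d → ℤ, φc x ∧ χ (a x) → χ x) :
    ∀ n x x', StepN φc a n x x' → χ x' → StepN χ a n x x' ∧ χ x := by
  intro n
  induction n with
  | zero => intro x x' h hχ; exact ⟨h, h ▸ hχ⟩
  | succ m ih =>
    intro x x' ⟨y, hs, hrest⟩ hχ
    obtain ⟨h1, h2⟩ := ih y x' hrest hχ
    have hχx : χ x := hmon x ⟨hs.1, hs.2 ▸ h2⟩
    exact ⟨⟨y, ⟨hχx, hs.2⟩, h1⟩, hχx⟩

lemma stepN_append {d : ℕ} (χ : (Fin d → ℤ) → Prop) (a : (Fin d → ℤ) → (Fin d → ℤ)) :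
    ∀ n x z x', StepN χ a n x z → Step χ a z x' → StepN χ a (n + 1) x x' := by
  intro n
  induction n with
  | zero => intro x z x' h hs; exact ⟨x', h ▸ hs, rfl⟩
  | succ m ih =>
    intro x z x' ⟨y, hs, hrest⟩ hl
    exact ⟨y, hs, ih y z x' hrest hl⟩

theorem conditional_monotonic_decrease_sound
    {d : ℕ} (φc χ : (Fin d → ℤ) → Prop) (a : (Fin d → ℤ) → (Fin d → ℤ))
    (hmon : ∀ x : Fin d → ℤ, φc x ∧ χ (a x) → χ x) :
    ∀ n : ℕ, 0 < n → ∀ x x' : Fin d → ℤ,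
      (StepN φc a n x x' ∧ x' = a^[n] x ∧ χ (a^[n - 1] x)) → StepN χ a n x x' := by
  intro n hn x x' ⟨hstep, _, hχ⟩
  obtain ⟨m, rfl⟩ := Nat.exists_eq_add_of_lt hn
  simp only [Nat.zero_add] at *
  obtain ⟨h1, h2⟩ := stepN_split φc a m x x' hstep
  have hχm : χ (a^[m] x) := by simpa using hχ
  obtain ⟨hχstep, _⟩ := stepN_chi φc χ a hmon m x (a^[m] x) h1 hχm
  exact stepN_append χ a m x (a^[m] x) x' hχstep ⟨hχm, h2.2⟩
end

section
/- Conditional Acceleration via Metering Functions (Theorem 7, soundness): Let φ̌, χ : ℤ^d → Prop, a : ℤ^d → ℤ^d, and mf : ℤ^d → ℚ satisfy, for all x ∈ ℤ^d: (φ̌(x) ∧ χ(x)) → mf(x) - mf(a(x)) ≤ 1, and (φ̌(x) ∧ ¬χ(x)) → mf(x) ≤ 0. Then for every n > 0 and all x, x' ∈ ℤ^d: (x →ⁿ_{⟨φ̌,a⟩} x' ∧ x' = aⁿ(x) ∧ χ(x) ∧ (n : ℚ) < mf(x) + 1) implies x →ⁿ_{⟨χ,a⟩} x'. -/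
theorem conditional_metering_sound
    {d : ℕ} (φc χ : (Fin d → ℤ) → Prop) (a : (Fin d → ℤ) → (Fin d → ℤ))
    (mf : (Fin d → ℤ) → ℚ)
    (hdec : ∀ x : Fin d → ℤ, φc x ∧ χ x → mf x - mf (a x) ≤ 1)
    (hbound : ∀ x : Fin d → ℤ, φc x ∧ ¬ χ x → mf x ≤ 0) :
    ∀ n : ℕ, 0 < n → ∀ x x' : Fin d → ℤ,
      (StepN φc a n x x' ∧ x' = a^[n] x ∧ χ x ∧ (n : ℚ) < mf x + 1) →
        StepN χ a n x x' := by
  have aux : ∀ n : ℕ, ∀ x x' : Fin d → ℤ, StepN φc a n x x' → χ x →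
      (n : ℚ) < mf x + 1 → StepN χ a n x x' := by
    intro n
    induction n with
    | zero => intro x x' h _ _; exact h
    | succ m ih =>
      intro x x' h hχ hlt
      obtain ⟨y, ⟨hφ, hya⟩, hrest⟩ := h
      refine ⟨y, ⟨hχ, hya⟩, ?_⟩
      cases m with
      | zero => exact hrest
      | succ k =>
        have hφy : φc y := by
          obtain ⟨z, ⟨hφy, _⟩, _⟩ := hrest
          exact hφy
        have hdx := hdec x ⟨hφ, hχ⟩
        have hmfy : ((k : ℚ) + 1) - 1 < mf y := by
          have h1 : ((k : ℚ) + 1 + 1) < mf x + 1 := by push_cast at hlt; linarith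
          rw [hya] at *
          linarith
        have hχy : χ y := by
          by_contra hc
          have := hbound y ⟨hφy, hc⟩
          have : (0 : ℚ) ≤ (k : ℚ) := Nat.cast_nonneg k
          linarith
        apply ih y x' hrest hχy
        push_cast
        linarith
  intro n _ x x' ⟨h1, _, h3, h4⟩
  exact aux n x x' h1 h3 h4
end

section
/- Acceleration via Eventual Decrease (Theorem 8, soundness): Let a : ℤ^d → ℤ^d, k ∈ ℕ, and for each i ∈ Fin k let C_i : ℤ^d → Prop be a clause and expr_i : ℤ^d → ℚ an expression such that (i) for all x ∈ ℤ^d, expr_i(x) > 0 → C_i(x) (the clause C_i contains the inequation expr_i > 0), and (ii) for all x ∈ ℤ^d, expr_i(x) ≥ expr_i(a(x)) → expr_i(a(x)) ≥ expr_i(a²(x)). Let φ(x) := ∀ i, C_i(x). Then for every n > 0 and all x, x' ∈ ℤ^d: (x' = aⁿ(x) ∧ ∀ i, (expr_i(x) > 0 ∧ expr_i(a^{n-1}(x)) > 0)) implies x →ⁿ_{⟨φ,a⟩} x'. -/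
lemma seq_pos_of_ev_dec (f : ℕ → ℚ)
    (h : ∀ j, f j ≥ f (j+1) → f (j+1) ≥ f (j+2)) (N : ℕ)
    (h0 : 0 < f 0) (hN : 0 < f N) : ∀ m ≤ N, 0 < f m := by
  have step : ∀ j, f j ≥ f (j+1) → ∀ t, f (j+t) ≥ f (j+t+1) := by
    intro j hj t
    induction t with
    | zero => exact hj
    | succ t ih => exact h (j+t) ih
  have anti : ∀ j, f j ≥ f (j+1) → ∀ m, j ≤ m → ∀ t, f (m+t) ≤ f m := by
    intro j hj m hjm t
    induction t with
    | zero => simp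
    | succ t ih =>
      have : f (m+t) ≥ f (m+t+1) := by
        obtain ⟨s, rfl⟩ := Nat.le.dest hjm
        have := step j hj (s+t)
        simpa [Nat.add_assoc] using this
      exact le_trans this ih
  intro m hm
  by_cases hmono : ∀ j < m, f j < f (j+1)
  · have : ∀ m', m' ≤ m → f 0 ≤ f m' := by
      intro m' hm'
      induction m' with
      | zero => exact le_refl _
      | succ m' ih =>
        exact le_trans (ih (Nat.le_of_succ_le hm')) (le_of_lt (hmono m' hm'))
    exact lt_of_lt_of_le h0 (this m le_rfl)
  · push_neg at hmono
    obtain ⟨j, hjm, hj⟩ := hmono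
    obtain ⟨t, rfl⟩ := Nat.le.dest hm
    exact lt_of_lt_of_le hN (anti j hj m (Nat.le_of_lt hjm) t)

theorem acceleration_via_eventual_decrease_sound
    {d : ℕ} (a : (Fin d → ℤ) → (Fin d → ℤ)) (k : ℕ)
    (C : Fin k → (Fin d → ℤ) → Prop) (expr : Fin k → (Fin d → ℤ) → ℚ)
    (hC : ∀ i : Fin k, ∀ x : Fin d → ℤ, expr i x > 0 → C i x)
    (hev : ∀ i : Fin k, ∀ x : Fin d → ℤ,
      expr i x ≥ expr i (a x) → expr i (a x) ≥ expr i (a (a x))) :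
    ∀ n : ℕ, 0 < n → ∀ x x' : Fin d → ℤ,
      (x' = a^[n] x ∧ ∀ i : Fin k, expr i x > 0 ∧ expr i (a^[n - 1] x) > 0) →
        StepN (fun y => ∀ i : Fin k, C i y) a n x x' := by
  intro n hn x x' ⟨hx', hpos⟩
  -- key: φ holds along the first n-1 steps
  have key : ∀ m, m ≤ n - 1 → ∀ i, 0 < expr i (a^[m] x) := by
    intro m hm i
    have := seq_pos_of_ev_dec (fun j => expr i (a^[j] x)) ?_ (n-1)
      (by simpa using (hpos i).1) ((hpos i).2) m hm
    · exact this
    · intro j hj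
      have := hev i (a^[j] x) (by simpa [Function.iterate_succ_apply'] using hj)
      simpa [Function.iterate_succ_apply'] using this
  subst hx'
  clear hpos
  -- generalize: StepN φ a n x (a^[n] x) if φ holds at a^[m] x for m < n
  have gen : ∀ n : ℕ, ∀ x : Fin d → ℤ,
      (∀ m < n, ∀ i, 0 < expr i (a^[m] x)) →
      StepN (fun y => ∀ i : Fin k, C i y) a n x (a^[n] x) := by
    intro n
    induction n with
    | zero => intro x _; rfl
    | succ n ih =>
      intro x hx
      refine ⟨a x, ⟨fun i => hC i x (by simpa using hx 0 (Nat.succ_pos n) i), rfl⟩, ?_⟩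
      have := ih (a x) (fun m hm i => by
        have := hx (m+1) (Nat.succ_lt_succ hm) i
        simpa [Function.iterate_succ_apply] using this)
      simpa [Function.iterate_succ_apply] using this
  exact gen n x (fun m hm i => key m (Nat.le_sub_one_of_lt hm) i)
end

section
/- Acceleration via Eventual Decrease (Theorem 8, exact case): Let a : ℤ^d → ℤ^d, k ∈ ℕ, and for each i ∈ Fin k let expr_i : ℤ^d → ℚ satisfy, for all x ∈ ℤ^d, expr_i(x) ≥ expr_i(a(x)) → expr_i(a(x)) ≥ expr_i(a²(x)). Let φ(x) := ∀ i, expr_i(x) > 0. Then for every n > 0 and all x, x' ∈ ℤ^d: (x' = aⁿ(x) ∧ ∀ i, (expr_i(x) > 0 ∧ expr_i(a^{n-1}(x)) > 0)) holds if and only if x →ⁿ_{⟨φ,a⟩} x'. -/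
lemma aux_pos (f : ℕ → ℚ) (hf : ∀ m, f m ≥ f (m+1) → f (m+1) ≥ f (m+2))
    (N m : ℕ) (hm : m ≤ N) (h0 : 0 < f 0) (hN : 0 < f N) : 0 < f m := by
  by_cases hc : ∀ j < m, f j < f (j+1)
  · have key : ∀ p, p ≤ m → f 0 ≤ f p := by
      intro p hp
      induction p with
      | zero => exact le_refl _
      | succ q ih =>
          exact le_trans (ih (Nat.le_of_succ_le hp)) (le_of_lt (hc q hp))
    exact lt_of_lt_of_le h0 (key m le_rfl)
  · push_neg at hc
    obtain ⟨j, hj, hdec⟩ := hc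
    have step : ∀ p, f (j + p) ≥ f (j + p + 1) := by
      intro p
      induction p with
      | zero => simpa using hdec
      | succ q ih => exact hf (j + q) ih
    have anti : ∀ p q, j ≤ p → p ≤ q → f q ≤ f p := by
      intro p q hp hpq
      induction q with
      | zero =>
          have : p = 0 := Nat.le_zero.mp hpq
          simp [this]
      | succ r ih =>
          rcases Nat.lt_or_ge p (r+1) with h | h
          · have hpr : p ≤ r := Nat.lt_succ_iff.mp h
            refine le_trans ?_ (ih hpr)
            have hjr : j ≤ r := le_trans hp hpr
            obtain ⟨t, ht⟩ := Nat.exists_eq_add_of_le hjr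
            have := step t
            simpa [← ht] using this
          · have : p = r + 1 := le_antisymm hpq h
            simp [this]
    have := anti m N (le_of_lt hj) hm
    exact lt_of_lt_of_le hN this

theorem acceleration_via_eventual_decrease_exact
    {d : ℕ} (a : (Fin d → ℤ) → (Fin d → ℤ)) (k : ℕ)
    (expr : Fin k → (Fin d → ℤ) → ℚ)
    (hev : ∀ i : Fin k, ∀ x : Fin d → ℤ,
      expr i x ≥ expr i (a x) → expr i (a x) ≥ expr i (a (a x))) :
    ∀ n : ℕ, 0 < n → ∀ x x' : Fin d → ℤ,
      (x' = a^[n] x ∧ ∀ i : Fin k, expr i x > 0 ∧ expr i (a^[n - 1] x) > 0) ↔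
        StepN (fun y => ∀ i : Fin k, expr i y > 0) a n x x' := by
  set φ : (Fin d → ℤ) → Prop := fun y => ∀ i : Fin k, expr i y > 0 with hφ
  -- backward: StepN gives the trajectory facts
  have bwd : ∀ n x x', StepN φ a n x x' →
      x' = a^[n] x ∧ ∀ m < n, φ (a^[m] x) := by
    intro n
    induction n with
    | zero => intro x x' h; exact ⟨h.symm, fun m hm => absurd hm (Nat.not_lt_zero m)⟩
    | succ p ih =>
        rintro x x' ⟨y, ⟨hx, rfl⟩, hrest⟩
        obtain ⟨heq, hall⟩ := ih (a x) x' hrest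
        constructor
        · rw [heq, ← Function.iterate_succ_apply]
        · intro m hm
          match m with
          | 0 => simpa using hx
          | q + 1 =>
              have := hall q (Nat.lt_of_succ_lt_succ hm)
              simpa [Function.iterate_succ_apply] using this
  -- forward builder
  have fwd : ∀ n x, (∀ m < n, φ (a^[m] x)) → StepN φ a n x (a^[n] x) := by
    intro n
    induction n with
    | zero => intro x _; rfl
    | succ p ih =>
        intro x h
        refine ⟨a x, ⟨by simpa using h 0 (Nat.succ_pos p), rfl⟩, ?_⟩
        have := ih (a x) (fun m hm => by
          have := h (m+1) (Nat.succ_lt_succ hm)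
          simpa [Function.iterate_succ_apply] using this)
        simpa [Function.iterate_succ_apply] using this
  intro n hn x x'
  constructor
  · rintro ⟨rfl, hpos⟩
    have hall : ∀ m < n, φ (a^[m] x) := by
      intro m hm i
      have hfi : ∀ p, expr i (a^[p] x) ≥ expr i (a^[p+1] x) →
          expr i (a^[p+1] x) ≥ expr i (a^[p+2] x) := by
        intro p hp
        have := hev i (a^[p] x) (by simpa [Function.iterate_succ_apply'] using hp)
        simpa [Function.iterate_succ_apply'] using this
      have h0 : 0 < expr i (a^[0] x) := by simpa using (hpos i).1
      have hN : 0 < expr i (a^[n-1] x) := (hpos i).2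
      exact aux_pos (fun p => expr i (a^[p] x)) hfi (n-1) m
        (Nat.le_pred_of_lt hm) h0 hN
    exact fwd n x hall
  · intro h
    obtain ⟨heq, hall⟩ := bwd n x x' h
    refine ⟨heq, fun i => ⟨?_, ?_⟩⟩
    · have := hall 0 hn i; simpa using this
    · exact hall (n-1) (Nat.pred_lt (Nat.pos_iff_ne_zero.mp hn)) i
end

section
/- Conditional Acceleration via Eventual Decrease (Theorem 9, soundness): Let φ̌ : ℤ^d → Prop, a : ℤ^d → ℤ^d, k ∈ ℕ, and for each i ∈ Fin k let C_i : ℤ^d → Prop and expr_i : ℤ^d → ℚ satisfy (i) for all x ∈ ℤ^d, expr_i(x) > 0 → C_i(x), and (ii) for all x ∈ ℤ^d, (φ̌(x) ∧ expr_i(x) ≥ expr_i(a(x))) → expr_i(a(x)) ≥ expr_i(a²(x)). Let χ(x) := ∀ i, C_i(x). Then for every n > 0 and all x, x' ∈ ℤ^d: (x →ⁿ_{⟨φ̌,a⟩} x' ∧ x' = aⁿ(x) ∧ ∀ i, (expr_i(x) > 0 ∧ expr_i(a^{n-1}(x)) > 0)) implies x →ⁿ_{⟨χ,a⟩} x'.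 -/
lemma stepN_phi {d : ℕ} (φ : (Fin d → ℤ) → Prop) (a : (Fin d → ℤ) → (Fin d → ℤ)) :
    ∀ n x x', StepN φ a n x x' → ∀ j < n, φ (a^[j] x) := by
  intro n
  induction n with
  | zero => intro x x' _ j hj; omega
  | succ n ih =>
    rintro x x' ⟨y, ⟨hφ, rfl⟩, hs⟩ j hj
    cases j with
    | zero => simpa using hφ
    | succ j =>
      rw [Function.iterate_succ_apply]
      exact ih (a x) x' hs j (by omega)

lemma stepN_of_phi {d : ℕ} (φ : (Fin d → ℤ) → Prop) (a : (Fin d → ℤ) → (Fin d → ℤ)) :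
    ∀ n x, (∀ j < n, φ (a^[j] x)) → StepN φ a n x (a^[n] x) := by
  intro n
  induction n with
  | zero => intro x _; rfl
  | succ n ih =>
    intro x h
    refine ⟨a x, ⟨by simpa using h 0 (by omega), rfl⟩, ?_⟩
    rw [Function.iterate_succ_apply]
    exact ih (a x) (fun j hj => by
      rw [← Function.iterate_succ_apply]
      exact h (j + 1) (by omega))

theorem conditional_eventual_decrease_sound
    {d : ℕ} (φc : (Fin d → ℤ) → Prop) (a : (Fin d → ℤ) → (Fin d → ℤ)) (k : ℕ)
    (C : Fin k → (Fin d → ℤ) → Prop) (expr : Fin k → (Fin d → ℤ) → ℚ)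
    (hC : ∀ i : Fin k, ∀ x : Fin d → ℤ, expr i x > 0 → C i x)
    (hev : ∀ i : Fin k, ∀ x : Fin d → ℤ,
      φc x ∧ expr i x ≥ expr i (a x) → expr i (a x) ≥ expr i (a (a x))) :
    ∀ n : ℕ, 0 < n → ∀ x x' : Fin d → ℤ,
      (StepN φc a n x x' ∧ x' = a^[n] x ∧
        ∀ i : Fin k, expr i x > 0 ∧ expr i (a^[n - 1] x) > 0) →
          StepN (fun y => ∀ i : Fin k, C i y) a n x x' := by
  rintro n hn x x' ⟨hstep, hx', hexp⟩
  have hφ : ∀ j < n, φc (a^[j] x) := stepN_phi φc a n x x' hstep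
  -- key positivity of expr along the trajectory
  have key : ∀ i : Fin k, ∀ j ≤ n - 1, 0 < expr i (a^[j] x) := by
    intro i j hj
    obtain ⟨h0, hlast⟩ := hexp i
    -- once the sequence weakly decreases at index m (< n), it keeps decreasing
    have hdec : ∀ m, m < n → expr i (a^[m] x) ≥ expr i (a^[m + 1] x) →
        ∀ t, m + t < n → expr i (a^[m + t] x) ≥ expr i (a^[m + t + 1] x) := by
      intro m hm hge t
      induction t with
      | zero => intro _; simpa using hge
      | succ t iht =>
        intro hlt
        have h1 : expr i (a^[m + t] x) ≥ expr i (a^[m + t + 1] x) := iht (by omega)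
        have h2 := hev i (a^[m + t] x) ⟨hφ (m + t) (by omega), by
          simpa [Function.iterate_succ_apply'] using h1⟩
        have e : m + (t + 1) = m + t + 1 := by omega
        rw [e]
        simpa [Function.iterate_succ_apply'] using h2
    by_cases hcase : ∃ m, m < j ∧ expr i (a^[m] x) ≥ expr i (a^[m + 1] x)
    · obtain ⟨m, hmj, hge⟩ := hcase
      have hmn : m < n := by omega
      -- chain down from j to n - 1
      have chain : ∀ s, j + s ≤ n - 1 → expr i (a^[j] x) ≥ expr i (a^[j + s] x) := by
        intro s
        induction s with
        | zero => intro _; simp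
        | succ s ihs =>
          intro hs
          have h1 := ihs (by omega)
          have h2 : expr i (a^[j + s] x) ≥ expr i (a^[j + s + 1] x) := by
            have := hdec m hmn hge (j + s - m) (by omega)
            have e : m + (j + s - m) = j + s := by omega
            rw [e] at this
            exact this
          calc expr i (a^[j + s + 1] x) ≤ expr i (a^[j + s] x) := h2
            _ ≤ expr i (a^[j] x) := h1
      have := chain (n - 1 - j) (by omega)
      have e : j + (n - 1 - j) = n - 1 := by omega
      rw [e] at this
      linarith
    · push_neg at hcase
      -- strictly increasing up to j
      have inc : ∀ s ≤ j, expr i x ≤ expr i (a^[s] x) := by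
        intro s
        induction s with
        | zero => intro _; simp
        | succ s ihs =>
          intro hs
          have h1 := ihs (by omega)
          have h2 := hcase s (by omega)
          linarith
      have := inc j le_rfl
      linarith
  -- assemble
  have hχ : ∀ j < n, ∀ i : Fin k, C i (a^[j] x) := by
    intro j hj i
    exact hC i _ (key i j (by omega))
  subst hx'
  exact stepN_of_phi _ a n x hχ
end

section
/- Conditional Acceleration via Eventual Decrease (Theorem 9, exactness part): Let φ̌ : ℤ^d → Prop, a : ℤ^d → ℤ^d, k ∈ ℕ, and for each i ∈ Fin k let expr_i : ℤ^d → ℚ satisfy, for all x ∈ ℤ^d, (φ̌(x) ∧ expr_i(x) ≥ expr_i(a(x))) → expr_i(a(x)) ≥ expr_i(a²(x)). Let χ(x) := ∀ i, expr_i(x) > 0. Then for every n > 0 and all x, x' ∈ ℤ^d: x →ⁿ_{⟨λ y, χ(y) ∧ φ̌(y), a⟩} x' implies (x' = aⁿ(x) ∧ ∀ i, (expr_i(x) > 0 ∧ expr_i(a^{n-1}(x)) > 0)). -/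
lemma stepN_aux {d : ℕ} (φ : (Fin d → ℤ) → Prop) (a : (Fin d → ℤ) → (Fin d → ℤ)) :
    ∀ n x x', StepN φ a (n+1) x x' → x' = a^[n+1] x ∧ φ x ∧ φ (a^[n] x) := by
  intro n
  induction n with
  | zero =>
    rintro x x' ⟨y, ⟨hφ, rfl⟩, heq⟩
    exact ⟨heq.symm, hφ, hφ⟩
  | succ n ih =>
    rintro x x' ⟨y, ⟨hφ, rfl⟩, hrest⟩
    obtain ⟨h1, h2, h3⟩ := ih (a x) x' hrest
    refine ⟨?_, hφ, ?_⟩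
    · rw [h1, ← Function.iterate_succ_apply]
    · rwa [Function.iterate_succ_apply]

theorem conditional_eventual_decrease_exact
    {d : ℕ} (φc : (Fin d → ℤ) → Prop) (a : (Fin d → ℤ) → (Fin d → ℤ)) (k : ℕ)
    (expr : Fin k → (Fin d → ℤ) → ℚ)
    (hev : ∀ i : Fin k, ∀ x : Fin d → ℤ,
      φc x ∧ expr i x ≥ expr i (a x) → expr i (a x) ≥ expr i (a (a x))) :
    ∀ n : ℕ, 0 < n → ∀ x x' : Fin d → ℤ,
      StepN (fun y => (∀ i : Fin k, expr i y > 0) ∧ φc y) a n x x' →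
        (x' = a^[n] x ∧ ∀ i : Fin k, expr i x > 0 ∧ expr i (a^[n - 1] x) > 0) := by
  rintro n hn x x' hs
  obtain ⟨m, rfl⟩ := Nat.exists_eq_add_of_lt hn
  simp only [Nat.zero_add] at hs ⊢
  obtain ⟨h1, ⟨hχ, hφ⟩, hχ', hφ'⟩ := stepN_aux _ a m x x' hs
  exact ⟨h1, fun i => ⟨hχ i, by simpa using hχ' i⟩⟩
end

section
/- Minimum bound along eventually decreasing orbits (key claim in the proof of Theorem 9): Let φ̌ : ℤ^d → Prop, a : ℤ^d → ℤ^d, expr : ℤ^d → ℚ, and x ∈ ℤ^d. Assume (i) for all y ∈ ℤ^d, (φ̌(y) ∧ expr(y) ≥ expr(a(y))) → expr(a(y)) ≥ expr(a²(y)), and (ii) for some n > 0, φ̌(aⁱ(x)) holds for all i < n. Then for every m < n: expr(a^m(x)) ≥ min(expr(x), expr(a^{n-1}(x))). -/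
theorem min_bound_eventually_decreasing
    {d : ℕ} (φc : (Fin d → ℤ) → Prop) (a : (Fin d → ℤ) → (Fin d → ℤ))
    (expr : (Fin d → ℤ) → ℚ) (x : Fin d → ℤ)
    (hev : ∀ y : Fin d → ℤ,
      φc y ∧ expr y ≥ expr (a y) → expr (a y) ≥ expr (a (a y)))
    (n : ℕ) (hn : 0 < n) (hφ : ∀ i < n, φc (a^[i] x)) :
    ∀ m < n, expr (a^[m] x) ≥ min (expr x) (expr (a^[n - 1] x)) := by
  set f : ℕ → ℚ := fun i => expr (a^[i] x) with hf
  have hstep : ∀ k, k < n → f k ≥ f (k + 1) → f (k + 1) ≥ f (k + 2) := by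
    intro k hk h
    have := hev (a^[k] x) ⟨hφ k hk, by
      simpa [hf, Function.iterate_succ_apply'] using h⟩
    simpa [hf, Function.iterate_succ_apply'] using this
  intro m hm
  by_cases hcase : ∀ j < m, f j < f (j + 1)
  · -- increasing up to m, so f m ≥ f 0
    have : ∀ t, t ≤ m → f 0 ≤ f t := by
      intro t ht
      induction t with
      | zero => exact le_refl _
      | succ t ih =>
        exact le_trans (ih (Nat.le_of_succ_le ht)) (le_of_lt (hcase t ht))
    have h0 : f 0 ≤ f m := this m le_rfl
    calc min (expr x) (expr (a^[n-1] x)) ≤ expr x := min_le_left _ _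
      _ = f 0 := by simp [hf]
      _ ≤ f m := h0
  · push_neg at hcase
    obtain ⟨j, hj, hdec⟩ := hcase
    -- from j on, f is nonincreasing (within range)
    have hmono : ∀ k, j ≤ k → k < n → f k ≥ f (k + 1) := by
      intro k hjk hk
      induction k with
      | zero =>
        have : j = 0 := Nat.le_zero.mp hjk
        subst this; exact hdec
      | succ k ih =>
        rcases Nat.lt_or_ge j (k + 1) with h | h
        · exact hstep k (Nat.lt_of_succ_lt hk) (ih (Nat.lt_succ_iff.mp h) (Nat.lt_of_succ_lt hk))
        · have : j = k + 1 := le_antisymm hjk h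
          subst this; exact hdec
    have hchain : ∀ t, m + t ≤ n - 1 → f m ≥ f (m + t) := by
      intro t ht
      induction t with
      | zero => exact le_refl _
      | succ t ih =>
        have h1 : m + t ≤ n - 1 := Nat.le_of_succ_le (by omega)
        have h2 : m + t < n := by omega
        have hjm : j ≤ m + t := by omega
        exact le_trans (hmono (m + t) hjm h2) (ih h1)
    have := hchain (n - 1 - m) (by omega)
    have heq : m + (n - 1 - m) = n - 1 := by omega
    rw [heq] at this
    exact le_trans (min_le_right _ _) this
end

section
/- Acceleration via Eventual Increase (Theorem 10, soundness): Let a : ℤ^d → ℤ^d, k ∈ ℕ, and for each i ∈ Fin k let C_i : ℤ^d → Prop and expr_i : ℤ^d → ℚ satisfy (i) for all x ∈ ℤ^d, expr_i(x) > 0 → C_i(x), and (ii) for all x ∈ ℤ^d, expr_i(x) ≤ expr_i(a(x)) → expr_i(a(x)) ≤ expr_i(a²(x)). Let φ(x) := ∀ i, C_i(x). Then for every n > 0 and all x, x' ∈ ℤ^d: (x' = aⁿ(x) ∧ ∀ i, (0 < expr_i(x) ∧ expr_i(x) ≤ expr_i(a(x)))) implies x →ⁿ_{⟨φ,a⟩}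 x'. -/
theorem acceleration_via_eventual_increase_sound
    {d : ℕ} (a : (Fin d → ℤ) → (Fin d → ℤ)) (k : ℕ)
    (C : Fin k → (Fin d → ℤ) → Prop) (expr : Fin k → (Fin d → ℤ) → ℚ)
    (hC : ∀ i : Fin k, ∀ x : Fin d → ℤ, expr i x > 0 → C i x)
    (hev : ∀ i : Fin k, ∀ x : Fin d → ℤ,
      expr i x ≤ expr i (a x) → expr i (a x) ≤ expr i (a (a x))) :
    ∀ n : ℕ, 0 < n → ∀ x x' : Fin d → ℤ,
      (x' = a^[n] x ∧ ∀ i : Fin k, 0 < expr i x ∧ expr i x ≤ expr i (a x)) →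
        StepN (fun y => ∀ i : Fin k, C i y) a n x x' := by
  intro n _ x x' ⟨hx', hinv⟩
  subst hx'
  clear *- hC hev hinv
  induction n generalizing x with
  | zero => rfl
  | succ m ih =>
    refine ⟨a x, ⟨fun i => hC i x (hinv i).1, rfl⟩, ?_⟩
    rw [Function.iterate_succ_apply]
    exact ih (a x) (fun i => ⟨lt_of_lt_of_le (hinv i).1 (hinv i).2, hev i x (hinv i).2⟩)
end

section
/- Conditional Acceleration via Eventual Increase (Theorem 11, soundness): Let φ̌ : ℤ^d → Prop, a : ℤ^d → ℤ^d, k ∈ ℕ, and for each i ∈ Fin k let C_i : ℤ^d → Prop and expr_i : ℤ^d → ℚ satisfy (i) for all x ∈ ℤ^d, expr_i(x) > 0 → C_i(x), and (ii) for all x ∈ ℤ^d, (φ̌(x) ∧ expr_i(x) ≤ expr_i(a(x))) → expr_i(a(x)) ≤ expr_i(a²(x)). Let χ(x) := ∀ i, C_i(x). Then for every n > 0 and all x, x' ∈ ℤ^d: (x →ⁿ_{⟨φ̌,a⟩} x' ∧ x' = aⁿ(x) ∧ ∀ i, (0 < expr_i(x) ∧ expr_i(x) ≤ expr_i(a(x))))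 implies x →ⁿ_{⟨χ,a⟩} x'. -/
theorem conditional_eventual_increase_sound
    {d : ℕ} (φc : (Fin d → ℤ) → Prop) (a : (Fin d → ℤ) → (Fin d → ℤ)) (k : ℕ)
    (C : Fin k → (Fin d → ℤ) → Prop) (expr : Fin k → (Fin d → ℤ) → ℚ)
    (hC : ∀ i : Fin k, ∀ x : Fin d → ℤ, expr i x > 0 → C i x)
    (hev : ∀ i : Fin k, ∀ x : Fin d → ℤ,
      φc x ∧ expr i x ≤ expr i (a x) → expr i (a x) ≤ expr i (a (a x))) :
    ∀ n : ℕ, 0 < n → ∀ x x' : Fin d → ℤ,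
      (StepN φc a n x x' ∧ x' = a^[n] x ∧
        ∀ i : Fin k, 0 < expr i x ∧ expr i x ≤ expr i (a x)) →
          StepN (fun y => ∀ i : Fin k, C i y) a n x x' := by
  have aux : ∀ n (x x' : Fin d → ℤ), StepN φc a n x x' →
      (∀ i : Fin k, 0 < expr i x ∧ expr i x ≤ expr i (a x)) →
      StepN (fun y => ∀ i : Fin k, C i y) a n x x' := by
    intro n
    induction n with
    | zero => intro x x' h _; exact h
    | succ m ih =>
      rintro x x' ⟨y, ⟨hφ, hy⟩, hrest⟩ h
      subst hy
      exact ⟨a x, ⟨fun i => hC i x (h i).1, rfl⟩,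
        ih (a x) x' hrest fun i =>
          ⟨lt_of_lt_of_le (h i).1 (h i).2, hev i x ⟨hφ, (h i).2⟩⟩⟩
  exact fun n _ x x' h => aux n x x' h.1 h.2.2
end
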